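/- arXiv:2603.12005 — 6 statements merged into one kernel-verified Lean document; each statement's English description precedes it below -/
import Mathlib

section
/- Let H₀ and H₁ be complex Hilbert spaces, α and γ bounded linear operators on H₀, β a bounded linear operator on H₁, and C : dom(C) ⊆ H₀ → H₁ densely defined and closed with Hilbert-space adjoint C*. Assume α = α*, β = β*, that there is c > 0 with ⟨αx, x⟩ ≥ c‖x‖² for all x ∈ H₀ and ⟨βy, y⟩ ≥ c‖y‖² for all y ∈ H₁, and that Re⟨γx, x⟩ ≥ 0 for all x ∈ H₀. Let √α and √β denote the (boundedly invertible) positive square roots of α and β. Then the operator A on H₀ × H₁ with domain dom(A) = {(u,v) : √α⁻¹u ∈ dom(C), √β⁻¹v ∈ dom(C*)}, defined by A(u,v) = (−√α⁻¹γ√α⁻¹u + √α⁻¹C*√β⁻¹v, −√β⁻¹C√α⁻¹u), is m-dissipative: Re⟨A(u,v), (u,v)⟩ ≤ 0 for all (u,v) ∈ dom(A), and for every (f,g) ∈ H₀ × H₁ there exists (u,v) ∈ dom(A) with (u,v) − A(u,v) = (f,g). -/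
/-!
Dissipativity is a direct computation: moving the self-adjoint `√α⁻¹` and `√β⁻¹` across the
inner products, the terms `⟨C* y, x⟩` and `⟨y, C x⟩` cancel in the real part, which leaves
`-Re ⟨γ x, x⟩ ≤ 0` with `x = √α⁻¹ u`.

For the range condition put `u = √α x`, `v = √β y`. Then `(1 - A)(u, v) = (f, g)` reads
`(α + γ) x - C* y = √α f` and `β⁻¹ C x + y = √β⁻¹ g`. Eliminating `y` leaves a variational
problem on the graph of `C`, a Hilbert space because `C` is closed: find `x ∈ dom C` with
`⟨(α + γ) x, x'⟩ + ⟨β⁻¹ C x, C x'⟩ = ⟨√α f, x'⟩ + ⟨√β⁻¹ g, C x'⟩` for all `x' ∈ dom C`.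
The form is coercive (`α` is coercive, `γ` accretive, `β⁻¹ = (√β⁻¹)²` coercive), so a complex
Lax–Milgram theorem solves it, and the variational identity says exactly that
`y := √β⁻¹ g - β⁻¹ C x` lies in `dom C*` with `C* y = (α + γ) x - √α f`.
-/

open Complex
open scoped InnerProductSpace

theorem IsSelfAdjoint.of_mul_eq_one {M : Type*} [Monoid M] [StarMul M] {a b : M}
    (ha : IsSelfAdjoint a) (hab : a * b = 1) : IsSelfAdjoint b := by
  have hba : star b * a = 1 := by simpa [ha.star_eq] using congrArg star hab
  calc star b = star b * (a * b) := by rw [hab, mul_one]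
    _ = b := by rw [← mul_assoc, hba, one_mul]

namespace ContinuousLinearMap

variable {E F : Type*} [NormedAddCommGroup E] [InnerProductSpace ℂ E]
  [NormedAddCommGroup F] [InnerProductSpace ℂ F]

/-- Unlike the root `IsCoercive` (real bilinear forms), this is about operators on a complex
space. -/
def IsCoercive (T : E →L[ℂ] E) : Prop :=
  ∃ c > 0, ∀ x, c * ‖x‖ ^ 2 ≤ (⟪x, T x⟫_ℂ).re

theorem IsCoercive.bounded_below {T : E →L[ℂ] E} (hT : T.IsCoercive) :
    ∃ c > 0, ∀ x, c * ‖x‖ ≤ ‖T x‖ := by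
  obtain ⟨c, hc, hT⟩ := hT
  refine ⟨c, hc, fun x => ?_⟩
  have h := (hT x).trans ((re_le_norm _).trans (norm_inner_le_norm x (T x)))
  rcases (norm_nonneg x).eq_or_lt with hx | hx
  · rw [← hx, mul_zero]; exact norm_nonneg _
  · nlinarith

theorem IsCoercive.surjective [CompleteSpace E] {T : E →L[ℂ] E} (hT : T.IsCoercive) :
    Function.Surjective T := by
  obtain ⟨c, hc, hbelow⟩ := hT.bounded_below
  have hanti : AntilipschitzWith c⁻¹.toNNReal T :=
    T.antilipschitz_of_bound fun x => by
      rw [Real.coe_toNNReal _ (inv_pos.2 hc).le, ← div_eq_inv_mul, le_div_iff₀ hc, mul_comm]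
      exact hbelow x
  set K := LinearMap.range (T : E →ₗ[ℂ] E)
  have hclosed : IsClosed (K : Set E) := by
    rw [LinearMap.coe_range]; exact hanti.isClosed_range T.uniformContinuous
  have : CompleteSpace K := hclosed.completeSpace_coe
  have hperp : Kᗮ = ⊥ := by
    refine (Submodule.eq_bot_iff _).2 fun w hw => ?_
    obtain ⟨c', hc', hT⟩ := hT
    have h0 : ⟪w, T w⟫_ℂ = 0 := inner_eq_zero_symm.1 (hw _ ⟨w, rfl⟩)
    have : c' * ‖w‖ ^ 2 ≤ 0 := by simpa [h0] using hT w
    exact norm_eq_zero.1 (pow_eq_zero_iff two_ne_zero |>.1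
      (le_antisymm (nonpos_of_mul_nonpos_right this hc') (by positivity)))
  exact LinearMap.range_eq_top.1 (Submodule.orthogonal_eq_bot_iff.1 hperp)

theorem IsCoercive.add {T S : E →L[ℂ] E} (hT : T.IsCoercive)
    (hS : ∀ x, 0 ≤ (⟪x, S x⟫_ℂ).re) : (T + S).IsCoercive := by
  obtain ⟨c, hc, hT⟩ := hT
  refine ⟨c, hc, fun x => ?_⟩
  rw [add_apply, inner_add_right, add_re]
  linarith [hT x, hS x]

def withLpProdMap (T : E →L[ℂ] E) (R : F →L[ℂ] F) :
    WithLp 2 (E × F) →L[ℂ] WithLp 2 (E × F) :=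
  (WithLp.prodContinuousLinearEquiv 2 ℂ E F).symm.toContinuousLinearMap ∘L T.prodMap R ∘L
    (WithLp.prodContinuousLinearEquiv 2 ℂ E F).toContinuousLinearMap

@[simp]
theorem withLpProdMap_apply (T : E →L[ℂ] E) (R : F →L[ℂ] F) (p : WithLp 2 (E × F)) :
    withLpProdMap T R p = WithLp.toLp 2 (T p.fst, R p.snd) :=
  rfl

theorem IsCoercive.withLpProdMap {T : E →L[ℂ] E} {R : F →L[ℂ] F} (hT : T.IsCoercive)
    (hR : R.IsCoercive) : (withLpProdMap T R).IsCoercive := by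
  obtain ⟨c₀, hc₀, hT⟩ := hT
  obtain ⟨c₁, hc₁, hR⟩ := hR
  refine ⟨min c₀ c₁, lt_min hc₀ hc₁, fun p => ?_⟩
  rw [withLpProdMap_apply, WithLp.prod_inner_apply, WithLp.ofLp_toLp, add_re,
    WithLp.prod_norm_sq_eq_of_L2]
  calc min c₀ c₁ * (‖p.fst‖ ^ 2 + ‖p.snd‖ ^ 2) ≤ c₀ * ‖p.fst‖ ^ 2 + c₁ * ‖p.snd‖ ^ 2 := by
        rw [mul_add]; gcongr; exacts [min_le_left _ _, min_le_right _ _]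
    _ ≤ (⟪p.fst, T p.fst⟫_ℂ).re + (⟪p.snd, R p.snd⟫_ℂ).re := add_le_add (hT _) (hR _)

theorem isCoercive_comp_self_of_comp_eq_id [CompleteSpace E] {P Q : E →L[ℂ] E}
    (hP : IsSelfAdjoint P) (hQP : Q ∘L P = ContinuousLinearMap.id ℂ E) : (P ∘L P).IsCoercive := by
  refine ⟨((‖Q‖ + 1) ^ 2)⁻¹, by positivity, fun x => ?_⟩
  have hx : ‖x‖ ≤ (‖Q‖ + 1) * ‖P x‖ := calc
    ‖x‖ = ‖Q (P x)‖ := by rw [← comp_apply, hQP, id_apply]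
    _ ≤ ‖Q‖ * ‖P x‖ := Q.le_opNorm _
    _ ≤ (‖Q‖ + 1) * ‖P x‖ := by gcongr; linarith
  rw [comp_apply, ← adjoint_inner_left, hP.adjoint_eq, ← RCLike.re_to_complex,
    inner_self_eq_norm_sq, inv_mul_le_iff₀ (by positivity), ← mul_pow]
  gcongr

end ContinuousLinearMap

theorem Submodule.exists_mem_sub_mem_orthogonal_of_isCoercive {E : Type*} [NormedAddCommGroup E]
    [InnerProductSpace ℂ E] (K : Submodule ℂ E) [CompleteSpace K] {Ψ : E →L[ℂ] E}
    (hΨ : Ψ.IsCoercive) (w : E) : ∃ p ∈ K, Ψ p - w ∈ Kᗮ := by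
  let Φ : K →L[ℂ] K := K.orthogonalProjectionOnto ∘L Ψ ∘L K.subtypeL
  have hΦ : Φ.IsCoercive := by
    obtain ⟨c, hc, hΨ⟩ := hΨ
    refine ⟨c, hc, fun p => ?_⟩
    simpa [Φ] using hΨ p
  obtain ⟨p, hp⟩ := hΦ.surjective (K.orthogonalProjectionOnto w)
  refine ⟨p, p.2, ?_⟩
  rw [← Submodule.orthogonalProjectionOnto_eq_zero_iff, map_sub, sub_eq_zero]
  exact hp

namespace LinearPMap

variable {E F : Type*} [NormedAddCommGroup E] [InnerProductSpace ℂ E] [CompleteSpace E]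
  [NormedAddCommGroup F] [InnerProductSpace ℂ F] [CompleteSpace F]

theorem re_inner_sandwich_le_zero (C : E →ₗ.[ℂ] F) (hdense : Dense (C.domain : Set E))
    {γ : E →L[ℂ] E} (hγ : ∀ x, 0 ≤ (⟪x, γ x⟫_ℂ).re) {P : E →L[ℂ] E} {Q : F →L[ℂ] F}
    (hP : IsSelfAdjoint P) (hQ : IsSelfAdjoint Q) (u : E) (v : F) (hu : P u ∈ C.domain)
    (hv : Q v ∈ C†.domain) :
    (⟪u, -(P (γ (P u))) + P (C† ⟨Q v, hv⟩)⟫_ℂ + ⟪v, -(Q (C ⟨P u, hu⟩))⟫_ℂ).re ≤ 0 := by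
  have hskew : ⟪P u, C† ⟨Q v, hv⟩⟫_ℂ = starRingEnd ℂ ⟪Q v, C ⟨P u, hu⟩⟫_ℂ := by
    rw [← inner_conj_symm, C.adjoint_isFormalAdjoint hdense ⟨Q v, hv⟩ ⟨P u, hu⟩]
  rw [inner_add_right, inner_neg_right, inner_neg_right,
    ← ContinuousLinearMap.adjoint_inner_left P (γ (P u)) u,
    ← ContinuousLinearMap.adjoint_inner_left P _ u, ← ContinuousLinearMap.adjoint_inner_left Q _ v,
    hP.adjoint_eq, hQ.adjoint_eq, hskew]
  simp only [add_re, neg_re, conj_re]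
  linarith [hγ (P u)]

theorem exists_forall_inner_add_inner_eq_zero {C : E →ₗ.[ℂ] F} (hC : C.IsClosed)
    {T : E →L[ℂ] E} {R : F →L[ℂ] F} (hT : T.IsCoercive) (hR : R.IsCoercive) (f : E) (h : F) :
    ∃ x : C.domain, ∀ x' : C.domain, ⟪(x' : E), T x - f⟫_ℂ + ⟪C x', R (C x) - h⟫_ℂ = 0 := by
  -- the graph of `C` inside the Hilbert space `E × F` with the `L²` norm
  let K := C.graph.comap (WithLp.linearEquiv 2 ℂ (E × F)).toLinearMap
  have : CompleteSpace K := (hC.preimage (WithLp.prod_continuous_ofLp 2 E F)).completeSpace_coe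
  obtain ⟨p, hpK, hp⟩ :=
    K.exists_mem_sub_mem_orthogonal_of_isCoercive (hT.withLpProdMap hR) (WithLp.toLp 2 (f, h))
  obtain ⟨x, hx₁, hx₂⟩ := C.mem_graph_iff.1 hpK
  refine ⟨x, fun x' => ?_⟩
  have hx'K : WithLp.toLp 2 ((x' : E), C x') ∈ K := C.mem_graph x'
  have hpx : p = WithLp.toLp 2 ((x : E), C x) := by
    rw [hx₁, hx₂]; rfl
  subst hpx
  have := Submodule.inner_right_of_mem_orthogonal hx'K hp
  simp only [WithLp.prod_inner_apply, inner_sub_right, ContinuousLinearMap.withLpProdMap_apply,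
    WithLp.toLp_fst, WithLp.toLp_snd] at this
  rw [inner_sub_right, inner_sub_right]
  linear_combination this

theorem exists_sub_adjoint_eq {C : E →ₗ.[ℂ] F} (hdense : Dense (C.domain : Set E))
    (hC : C.IsClosed) {T : E →L[ℂ] E} {R : F →L[ℂ] F} (hT : T.IsCoercive) (hR : R.IsCoercive)
    (f : E) (h : F) :
    ∃ (x : E) (hx : x ∈ C.domain) (y : F) (hy : y ∈ C†.domain),
      T x - C† ⟨y, hy⟩ = f ∧ R (C ⟨x, hx⟩) + y = h := by
  obtain ⟨x, hx⟩ := exists_forall_inner_add_inner_eq_zero hC hT hR f h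
  have hy : ∀ x' : C.domain, ⟪T x - f, (x' : E)⟫_ℂ = ⟪h - R (C x), C x'⟫_ℂ := by
    intro x'
    rw [← inner_conj_symm, ← inner_conj_symm (h - _), ← neg_sub (R _), inner_neg_right,
      ← eq_neg_of_add_eq_zero_left (hx x')]
  have hmem := mem_adjoint_domain_of_exists _ ⟨_, hy⟩
  refine ⟨x, x.2, h - R (C x), hmem, ?_, ?_⟩
  · rw [adjoint_apply_eq hdense ⟨_, hmem⟩ hy, sub_sub_cancel]
  · rw [add_sub_cancel]

end LinearPMap

theorem stmt_0_general
    {H₀ H₁ : Type*} [NormedAddCommGroup H₀] [InnerProductSpace ℂ H₀] [CompleteSpace H₀]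
    [NormedAddCommGroup H₁] [InnerProductSpace ℂ H₁] [CompleteSpace H₁]
    (α γ : H₀ →L[ℂ] H₀)
    (C : H₀ →ₗ.[ℂ] H₁)
    (hdense : Dense (C.domain : Set H₀))
    (hCclosed : IsClosed (C.graph : Set (H₀ × H₁)))
    (c : ℝ) (hc : 0 < c)
    (hαc : ∀ x : H₀, c * ‖x‖ ^ 2 ≤ (⟪x, α x⟫_ℂ).re)
    (hγ : ∀ x : H₀, 0 ≤ (⟪x, γ x⟫_ℂ).re)
    -- `sa` is the positive square root of `α`, with bounded inverse `sai`
    (sa sai : H₀ →L[ℂ] H₀)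
    (hsa : IsSelfAdjoint sa)
    (hsasq : sa.comp sa = α)
    (hsai : sa.comp sai = ContinuousLinearMap.id ℂ H₀)
    (hsai' : sai.comp sa = ContinuousLinearMap.id ℂ H₀)
    -- `sb` is the positive square root of `β`, with bounded inverse `sbi`
    (sb sbi : H₁ →L[ℂ] H₁)
    (hsb : IsSelfAdjoint sb)
    (hsbi : sb.comp sbi = ContinuousLinearMap.id ℂ H₁)
    (hsbi' : sbi.comp sb = ContinuousLinearMap.id ℂ H₁) :
    -- dissipativity: `Re ⟨A(u,v), (u,v)⟩ ≤ 0` on `dom A`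
    (∀ (u : H₀) (v : H₁) (hu : sai u ∈ C.domain) (hv : sbi v ∈ C.adjoint.domain),
      (⟪u, -(sai (γ (sai u))) + sai (C.adjoint ⟨sbi v, hv⟩)⟫_ℂ
        + ⟪v, -(sbi (C ⟨sai u, hu⟩))⟫_ℂ).re ≤ 0) ∧
    -- range condition: `1 - A` is onto
    (∀ (f : H₀) (g : H₁), ∃ (u : H₀) (v : H₁) (hu : sai u ∈ C.domain)
        (hv : sbi v ∈ C.adjoint.domain),
      u - (-(sai (γ (sai u))) + sai (C.adjoint ⟨sbi v, hv⟩)) = f ∧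
      v - (-(sbi (C ⟨sai u, hu⟩))) = g) := by
  have hsaiSA : IsSelfAdjoint sai := hsa.of_mul_eq_one hsai
  have hsbiSA : IsSelfAdjoint sbi := hsb.of_mul_eq_one hsbi
  refine ⟨C.re_inner_sandwich_le_zero hdense hγ hsaiSA hsbiSA, fun f g => ?_⟩
  obtain ⟨x, hx, y, hy, hCx, hCy⟩ := C.exists_sub_adjoint_eq hdense hCclosed
    (ContinuousLinearMap.IsCoercive.add ⟨c, hc, hαc⟩ hγ)
    (ContinuousLinearMap.isCoercive_comp_self_of_comp_eq_id hsbiSA hsbi) (sa f) (sbi g)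
  have hsai_sa (z : H₀) : sai (sa z) = z := DFunLike.congr_fun hsai' z
  have hsb_sbi (z : H₁) : sb (sbi z) = z := DFunLike.congr_fun hsbi z
  have hsbi_sb (z : H₁) : sbi (sb z) = z := DFunLike.congr_fun hsbi' z
  refine ⟨sa x, sb y, by rwa [hsai_sa], by rwa [hsbi_sb], ?_, ?_⟩
  · have hadj : C.adjoint ⟨y, hy⟩ = (α + γ) x - sa f := by rw [← hCx, sub_sub_cancel]
    simp only [hsai_sa, hsbi_sb, hadj, map_sub, add_apply, map_add, ← hsasq,
      ContinuousLinearMap.comp_apply]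
    abel
  · have hg := congrArg sb hCy
    simp only [map_add, ContinuousLinearMap.comp_apply, hsb_sbi] at hg
    simp only [hsai_sa, ← hg]
    abel

/-- Let `H₀, H₁` be complex Hilbert spaces, `α, γ` bounded operators on `H₀`,
`β` a bounded operator on `H₁`, and `C` densely defined and closed with adjoint `C*`.
Assume `α = α*`, `β = β*`, both bounded below by `c > 0`, and `Re⟨γx, x⟩ ≥ 0`.
With `sa = √α`, `sai = √α⁻¹`, `sb = √β`, `sbi = √β⁻¹` (the positive square roots and their
bounded inverses), the operator `A(u,v) = (−√α⁻¹γ√α⁻¹u + √α⁻¹C*√β⁻¹v, −√β⁻¹C√α⁻¹u)` with domain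
`{(u,v) : √α⁻¹u ∈ dom C, √β⁻¹v ∈ dom C*}` is m-dissipative.
(The paper's inner product `⟨a, b⟩`, linear in the first argument, is Mathlib's `⟪b, a⟫_ℂ`.) -/
theorem stmt_0
    {H₀ H₁ : Type*} [NormedAddCommGroup H₀] [InnerProductSpace ℂ H₀] [CompleteSpace H₀]
    [NormedAddCommGroup H₁] [InnerProductSpace ℂ H₁] [CompleteSpace H₁]
    (α γ : H₀ →L[ℂ] H₀) (β : H₁ →L[ℂ] H₁)
    (C : H₀ →ₗ.[ℂ] H₁)
    (hdense : Dense (C.domain : Set H₀))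
    (hCclosed : IsClosed (C.graph : Set (H₀ × H₁)))
    (hα : IsSelfAdjoint α) (hβ : IsSelfAdjoint β)
    (c : ℝ) (hc : 0 < c)
    (hαc : ∀ x : H₀, c * ‖x‖ ^ 2 ≤ (⟪x, α x⟫_ℂ).re)
    (hβc : ∀ y : H₁, c * ‖y‖ ^ 2 ≤ (⟪y, β y⟫_ℂ).re)
    (hγ : ∀ x : H₀, 0 ≤ (⟪x, γ x⟫_ℂ).re)
    -- `sa` is the positive square root of `α`, with bounded inverse `sai`
    (sa sai : H₀ →L[ℂ] H₀)
    (hsa : IsSelfAdjoint sa) (hsapos : ∀ x : H₀, 0 ≤ (⟪x, sa x⟫_ℂ).re)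
    (hsasq : sa.comp sa = α)
    (hsai : sa.comp sai = ContinuousLinearMap.id ℂ H₀)
    (hsai' : sai.comp sa = ContinuousLinearMap.id ℂ H₀)
    -- `sb` is the positive square root of `β`, with bounded inverse `sbi`
    (sb sbi : H₁ →L[ℂ] H₁)
    (hsb : IsSelfAdjoint sb) (hsbpos : ∀ y : H₁, 0 ≤ (⟪y, sb y⟫_ℂ).re)
    (hsbsq : sb.comp sb = β)
    (hsbi : sb.comp sbi = ContinuousLinearMap.id ℂ H₁)
    (hsbi' : sbi.comp sb = ContinuousLinearMap.id ℂ H₁) :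
    -- dissipativity: `Re ⟨A(u,v), (u,v)⟩ ≤ 0` on `dom A`
    (∀ (u : H₀) (v : H₁) (hu : sai u ∈ C.domain) (hv : sbi v ∈ C.adjoint.domain),
      (⟪u, -(sai (γ (sai u))) + sai (C.adjoint ⟨sbi v, hv⟩)⟫_ℂ
        + ⟪v, -(sbi (C ⟨sai u, hu⟩))⟫_ℂ).re ≤ 0) ∧
    -- range condition: `1 - A` is onto
    (∀ (f : H₀) (g : H₁), ∃ (u : H₀) (v : H₁) (hu : sai u ∈ C.domain)
        (hv : sbi v ∈ C.adjoint.domain),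
      u - (-(sai (γ (sai u))) + sai (C.adjoint ⟨sbi v, hv⟩)) = f ∧
      v - (-(sbi (C ⟨sai u, hu⟩))) = g) :=
  stmt_0_general α γ C hdense hCclosed c hc hαc hγ sa sai hsa hsasq hsai hsai' sb sbi hsb hsbi hsbi'
end

section
/- Assume H₀ and H₁ are complex Hilbert spaces, C : dom(C) ⊆ H₀ → H₁ is densely defined, closed and has closed range, and γ is a bounded operator on H₀ satisfying Hypothesis (Γ). Let A be the operator on H₀ × H₁ with domain dom(C) × dom(C*) given by A(u,v) = (−γu + C*v, −Cu), and let A* denote its Hilbert-space adjoint, namely the operator with domain dom(C) × dom(C*) given by A*(u,v) = (−γ*u − C*v, Cu). Then ker(A) = ker(A*). -/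
/-!
If `A (u, v) = 0` then `C u = 0` and `γ u = C* v`, and if `A* (u, v) = 0` then `C u = 0` and
`γ* u = -C* v`. Either way `⟪u, γ u⟫` is (up to sign and conjugation) `⟪C* v, u⟫ = ⟪v, C u⟫ = 0`.
Under Hypothesis (Γ), writing `u = x + y` with `x ∈ U`, `y ∈ Uᗮ`, this forces
`c ‖x‖² ≤ 0` and `⟪y, γ_⊥ y⟫ = 0`, hence `x = 0` and, by positivity of `γ_⊥`, `γ_⊥ y = 0`.
Since both `γ` and `γ*` act as `γ_⊥` on `Uᗮ`, we get `γ u = γ* u = 0`, and the two kernel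
equations become the same pair `C u = 0`, `C* v = 0`.
-/

open Complex Filter
open scoped InnerProductSpace

/-- Hypothesis (Γ): there is a closed subspace `U`, a `c > 0`, and operators `γU` on `U`
(with real part `≥ c`) and `γp` self-adjoint nonnegative on `Uᗮ` such that
`γ(x + y) = γU x + γp y` for `x ∈ U`, `y ∈ Uᗮ`. -/
def HypGamma {H : Type*} [NormedAddCommGroup H] [InnerProductSpace ℂ H] (γ : H →L[ℂ] H) : Prop :=
  ∃ (U : Submodule ℂ H) (c : ℝ) (γU : U →L[ℂ] U) (γp : Uᗮ →L[ℂ] Uᗮ),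
    IsClosed (U : Set H) ∧ 0 < c ∧
    (∀ x : U, c * ‖x‖ ^ 2 ≤ (⟪x, γU x⟫_ℂ).re) ∧
    (∀ y z : Uᗮ, ⟪γp y, z⟫_ℂ = ⟪y, γp z⟫_ℂ) ∧
    (∀ y : Uᗮ, 0 ≤ (⟪y, γp y⟫_ℂ).re) ∧
    (∀ (x : U) (y : Uᗮ), γ ((x : H) + (y : H)) = (γU x : H) + (γp y : H))

namespace LinearMap

variable {𝕜 E : Type*} [RCLike 𝕜] [NormedAddCommGroup E] [InnerProductSpace 𝕜 E]

/-- The quadratic `t ↦ re ⟪T (x + t • T x), x + t • T x⟫` is nonnegative and vanishes at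
`t = 0`, so its linear coefficient `2 ‖T x‖²` must vanish. -/
theorem IsPositive.apply_eq_zero_of_re_inner_eq_zero {T : E →ₗ[𝕜] E} (hT : T.IsPositive)
    {x : E} (hx : RCLike.re ⟪T x, x⟫_𝕜 = 0) : T x = 0 := by
  have hquad : ∀ t : ℝ,
      0 ≤ RCLike.re ⟪T (T x), T x⟫_𝕜 * (t * t) + 2 * ‖T x‖ ^ 2 * t + 0 := by
    intro t
    have hsymm : ⟪T (T x), x⟫_𝕜 = ⟪T x, T x⟫_𝕜 := hT.isSymmetric _ _
    have h := hT.re_inner_nonneg_left (x + (t : 𝕜) • T x)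
    simp only [map_add, map_smul, inner_add_left, inner_add_right, inner_smul_left,
      inner_smul_right, RCLike.conj_ofReal, hsymm, RCLike.re.map_add, hx, zero_add,
      RCLike.re_ofReal_mul] at h
    rw [← inner_self_eq_norm_sq (𝕜 := 𝕜)]
    linarith
  have hdiscrim := discrim_le_zero hquad
  rw [discrim, mul_zero, sub_zero] at hdiscrim
  have : ‖T x‖ ^ 2 = 0 := by nlinarith [sq_nonneg (‖T x‖ ^ 2)]
  simpa using this

end LinearMap

section Decomposition

variable {H : Type*} [NormedAddCommGroup H] [InnerProductSpace ℂ H]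
  {U : Submodule ℂ H} {γ : H →L[ℂ] H} {γU : U →L[ℂ] U} {γp : Uᗮ →L[ℂ] Uᗮ}

theorem apply_orthogonal_eq_of_decomposition
    (hsum : ∀ (x : U) (y : Uᗮ), γ ((x : H) + (y : H)) = (γU x : H) + (γp y : H)) (y : Uᗮ) :
    γ y = γp y := by
  simpa using hsum 0 y

theorem inner_apply_add_eq_of_decomposition
    (hsum : ∀ (x : U) (y : Uᗮ), γ ((x : H) + (y : H)) = (γU x : H) + (γp y : H))
    (x : U) (y : Uᗮ) :
    ⟪(x : H) + (y : H), γ ((x : H) + (y : H))⟫_ℂ = ⟪x, γU x⟫_ℂ + ⟪y, γp y⟫_ℂ := by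
  rw [hsum, inner_add_left, inner_add_right, inner_add_right,
    U.inner_right_of_mem_orthogonal x.2 (γp y).2, U.inner_left_of_mem_orthogonal (γU x).2 y.2,
    add_zero, zero_add, Submodule.coe_inner, Submodule.coe_inner]

theorem adjoint_apply_orthogonal_eq_of_decomposition [CompleteSpace H]
    [U.HasOrthogonalProjection]
    (hsum : ∀ (x : U) (y : Uᗮ), γ ((x : H) + (y : H)) = (γU x : H) + (γp y : H))
    (hsymm : ∀ y z : Uᗮ, ⟪γp y, z⟫_ℂ = ⟪y, γp z⟫_ℂ) (y : Uᗮ) :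
    ContinuousLinearMap.adjoint γ y = γp y := by
  refine ext_inner_right ℂ fun w => ?_
  obtain ⟨x, hx, z, hz, rfl⟩ := U.exists_add_mem_mem_orthogonal w
  rw [ContinuousLinearMap.adjoint_inner_left, hsum ⟨x, hx⟩ ⟨z, hz⟩, inner_add_right,
    inner_add_right, U.inner_left_of_mem_orthogonal (γU _).2 y.2,
    U.inner_left_of_mem_orthogonal hx (γp y).2, zero_add, zero_add]
  exact (hsymm y ⟨z, hz⟩).symm

end Decomposition

theorem HypGamma.apply_eq_zero_and_adjoint_apply_eq_zero {H : Type*} [NormedAddCommGroup H]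
    [InnerProductSpace ℂ H] [CompleteSpace H] {γ : H →L[ℂ] H} (hγ : HypGamma γ) {u : H}
    (hu : (⟪u, γ u⟫_ℂ).re = 0) : γ u = 0 ∧ ContinuousLinearMap.adjoint γ u = 0 := by
  obtain ⟨U, c, γU, γp, hUclosed, hc, hcoercive, hsymm, hnonneg, hsum⟩ := hγ
  have : CompleteSpace U := hUclosed.completeSpace_coe
  obtain ⟨x, hx, y, hy, rfl⟩ := U.exists_add_mem_mem_orthogonal u
  have hsplit : (⟪⟨x, hx⟩, γU ⟨x, hx⟩⟫_ℂ).re + (⟪⟨y, hy⟩, γp ⟨y, hy⟩⟫_ℂ).re = 0 := by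
    rw [← Complex.add_re, ← inner_apply_add_eq_of_decomposition hsum]
    exact hu
  have hx0 : x = 0 := by
    have hcx : c * ‖x‖ ^ 2 ≤ (⟪⟨x, hx⟩, γU ⟨x, hx⟩⟫_ℂ).re := hcoercive ⟨x, hx⟩
    have : ‖x‖ ^ 2 ≤ 0 := by nlinarith [hnonneg ⟨y, hy⟩]
    simpa using this
  have hγp : (γp : Uᗮ →ₗ[ℂ] Uᗮ).IsPositive :=
    ⟨hsymm, fun z => (hnonneg z).trans_eq (inner_re_symm (𝕜 := ℂ) _ _)⟩
  have hy0 : γp ⟨y, hy⟩ = 0 := hγp.apply_eq_zero_of_re_inner_eq_zero <|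
    (inner_re_symm (𝕜 := ℂ) _ _).trans (by simpa [hx0] using hsplit)
  subst hx0
  rw [zero_add, apply_orthogonal_eq_of_decomposition hsum ⟨y, hy⟩,
    adjoint_apply_orthogonal_eq_of_decomposition hsum hsymm ⟨y, hy⟩, hy0]
  simp

theorem LinearPMap.inner_adjoint_apply_eq_zero_of_apply_eq_zero {𝕜 E F : Type*} [RCLike 𝕜]
    [NormedAddCommGroup E] [InnerProductSpace 𝕜 E] [CompleteSpace E]
    [NormedAddCommGroup F] [InnerProductSpace 𝕜 F] {T : E →ₗ.[𝕜] F}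
    (hT : Dense (T.domain : Set E)) (v : T.adjoint.domain) {u : T.domain} (hu : T u = 0) :
    ⟪T.adjoint v, (u : E)⟫_𝕜 = 0 := by
  rw [adjoint_isFormalAdjoint hT v u, hu, inner_zero_right]

theorem stmt_4_general
    {H₀ H₁ : Type*} [NormedAddCommGroup H₀] [InnerProductSpace ℂ H₀] [CompleteSpace H₀]
    [NormedAddCommGroup H₁] [InnerProductSpace ℂ H₁]
    (C : H₀ →ₗ.[ℂ] H₁)
    (hdense : Dense (C.domain : Set H₀))
    (γ : H₀ →L[ℂ] H₀) (hγ : HypGamma γ) :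
    ∀ (u : C.domain) (v : C.adjoint.domain),
      (-(γ u) + C.adjoint v = 0 ∧ -(C u) = 0) ↔
      (-(ContinuousLinearMap.adjoint γ u) - C.adjoint v = 0 ∧ C u = 0) := by
  intro u v
  rw [neg_eq_zero, neg_add_eq_zero, neg_sub_left, neg_eq_zero, add_eq_zero_iff_eq_neg]
  constructor
  · rintro ⟨hγu, hCu⟩
    have hu : (⟪(u : H₀), γ u⟫_ℂ).re = 0 := by
      rw [hγu, inner_eq_zero_symm.mp
        (C.inner_adjoint_apply_eq_zero_of_apply_eq_zero hdense v hCu), Complex.zero_re]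
    obtain ⟨hγu0, hγ'u0⟩ := hγ.apply_eq_zero_and_adjoint_apply_eq_zero hu
    exact ⟨by rw [hγ'u0, ← hγu, hγu0, neg_zero], hCu⟩
  · rintro ⟨hCv, hCu⟩
    have hu : (⟪(u : H₀), γ u⟫_ℂ).re = 0 := by
      rw [← ContinuousLinearMap.adjoint_inner_left, ← neg_neg (ContinuousLinearMap.adjoint γ u),
        ← hCv, inner_neg_left, C.inner_adjoint_apply_eq_zero_of_apply_eq_zero hdense v hCu,
        neg_zero, Complex.zero_re]
    obtain ⟨hγu0, hγ'u0⟩ := hγ.apply_eq_zero_and_adjoint_apply_eq_zero hu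
    exact ⟨by rw [hCv, hγ'u0, hγu0, neg_zero], hCu⟩

/-- For `C` densely defined, closed, with closed range, and `γ` bounded
satisfying Hypothesis (Γ), the operator `A(u,v) = (−γu + C*v, −Cu)` and its adjoint
`A*(u,v) = (−γ*u − C*v, Cu)`, both with domain `dom C × dom C*`, have the same kernel. -/
theorem stmt_4
    {H₀ H₁ : Type*} [NormedAddCommGroup H₀] [InnerProductSpace ℂ H₀] [CompleteSpace H₀]
    [NormedAddCommGroup H₁] [InnerProductSpace ℂ H₁] [CompleteSpace H₁]
    (C : H₀ →ₗ.[ℂ] H₁)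
    (hdense : Dense (C.domain : Set H₀))
    (hCclosed : IsClosed (C.graph : Set (H₀ × H₁)))
    (hranC : IsClosed ((LinearMap.range C.toFun : Submodule ℂ H₁) : Set H₁))
    (γ : H₀ →L[ℂ] H₀) (hγ : HypGamma γ) :
    ∀ (u : C.domain) (v : C.adjoint.domain),
      (-(γ u) + C.adjoint v = 0 ∧ -(C u) = 0) ↔
      (-(ContinuousLinearMap.adjoint γ u) - C.adjoint v = 0 ∧ C u = 0) :=
  stmt_4_general C hdense γ hγ
end

section
/- Let H₀ be a complex Hilbert space and let γ be a bounded operator on H₀ satisfying Hypothesis (Γ). Let λ ∈ ℝ \ {0}. Then for every closed subspace V ⊆ H₀ with inclusion map ι : V → H₀ (whose adjoint ι* is the orthogonal projection onto V), the bounded operator iλ·I_V + ι*γι on V is bijective with bounded inverse. -/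
open Complex Filter
open scoped InnerProductSpace

/-- The orthogonal projection onto a submodule (junk value `0` if the submodule is not closed). -/
noncomputable def oproj {H : Type*} [NormedAddCommGroup H] [InnerProductSpace ℂ H]
    [CompleteSpace H] (K : Submodule ℂ H) : H →L[ℂ] K := by
  classical
  exact if h : IsClosed (K : Set H) then
    haveI := h.completeSpace_coe
    K.orthogonalProjectionOnto
  else 0

/-!
Hypothesis (Γ) puts the numerical range of `γ` in a sector `|Im z| ≤ K Re z`: for `w = x + y`
with `x ∈ U`, `y ∈ Uᗮ`, the `y`-part of `⟪w, γ w⟫` is real and nonnegative, and the `x`-part has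
`|Im| ≤ ‖γ_U‖ ‖x‖² ≤ (‖γ_U‖ / c) Re`.
Compression to `V` keeps the numerical range inside the sector, and adding `iλ` shifts it
vertically by `λ‖v‖²`, so `|⟪v, (iλ + ι*γι) v⟫| ≥ |λ| ‖v‖² / (1 + K)`. An operator whose
numerical range is bounded away from `0` in this way is invertible.
-/

open scoped NNReal

def IsSectorial {E : Type*} [NormedAddCommGroup E] [InnerProductSpace ℂ E]
    (T : E →L[ℂ] E) (K : ℝ≥0) : Prop :=
  ∀ x, |(⟪x, T x⟫_ℂ).im| ≤ K * (⟪x, T x⟫_ℂ).re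

theorem Complex.div_one_add_le_norm_add_ofReal_mul_I {q : ℂ} {K : ℝ≥0}
    (hq : |q.im| ≤ K * q.re) (t : ℝ) : |t| / (1 + K) ≤ ‖q + t * I‖ := by
  set r := |t| / (1 + K)
  have hr : r * (1 + K) = |t| := div_mul_cancel₀ _ (by positivity)
  rcases le_or_gt r q.re with hre | hre
  · calc r ≤ q.re := hre
      _ = (q + t * I).re := by simp
      _ ≤ ‖q + t * I‖ := re_le_norm _
  · have him : |t| ≤ |(q + t * I).im| + |q.im| := by
      simpa using abs_sub (q.im + t) q.im
    have := abs_im_le_norm (q + t * I)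
    nlinarith [mul_le_mul_of_nonneg_left hre.le K.2]

theorem inner_I_mul_smul_id_add_apply {E : Type*} [NormedAddCommGroup E]
    [InnerProductSpace ℂ E] (T : E →L[ℂ] E) (lam : ℝ) (x : E) :
    ⟪x, ((I * lam) • ContinuousLinearMap.id ℂ E + T) x⟫_ℂ =
      ⟪x, T x⟫_ℂ + (lam * ‖x‖ ^ 2 : ℝ) * I := by
  rw [add_apply, smul_apply, ContinuousLinearMap.id_apply, inner_add_right, inner_smul_right,
    inner_self_eq_norm_sq_to_K, RCLike.ofReal_eq_complex_ofReal]
  push_cast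
  ring

namespace IsSectorial

variable {E : Type*} [NormedAddCommGroup E] [InnerProductSpace ℂ E]
  {T : E →L[ℂ] E} {K : ℝ≥0}

theorem orthogonalProjectionOnto_comp (hT : IsSectorial T K) (V : Submodule ℂ E) [V.HasOrthogonalProjection] :
    IsSectorial (V.orthogonalProjectionOnto ∘L T ∘L V.subtypeL) K := fun v => by
  simpa [V.inner_orthogonalProjectionOnto_eq_of_mem_left] using hT v

theorem isUnit_I_mul_smul_id_add [CompleteSpace E] (hT : IsSectorial T K) {lam : ℝ}
    (hlam : lam ≠ 0) : IsUnit ((I * lam) • ContinuousLinearMap.id ℂ E + T) := by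
  refine ContinuousLinearMap.isUnit_of_forall_le_norm_inner_map _
    (c := ‖lam‖₊ / (1 + K)) (div_pos (nnnorm_pos.mpr hlam) (by positivity)) fun x => ?_
  rw [norm_inner_symm, inner_I_mul_smul_id_add_apply]
  calc ‖x‖ ^ 2 * ↑(‖lam‖₊ / (1 + K)) = |lam * ‖x‖ ^ 2| / (1 + K) := by
        rw [NNReal.coe_div, coe_nnnorm, Real.norm_eq_abs, abs_mul, abs_of_nonneg (sq_nonneg ‖x‖)]
        push_cast
        ring
    _ ≤ _ := Complex.div_one_add_le_norm_add_ofReal_mul_I (hT x) _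

end IsSectorial

theorem HypGamma.exists_isSectorial {H : Type*} [NormedAddCommGroup H] [InnerProductSpace ℂ H]
    [CompleteSpace H] {γ : H →L[ℂ] H} (hγ : HypGamma γ) : ∃ K, IsSectorial γ K := by
  obtain ⟨U, c, γU, γp, hU, hc, hγU, hγp_symm, hγp_nonneg, hγ_apply⟩ := hγ
  have : CompleteSpace U := hU.completeSpace_coe
  refine ⟨(‖γU‖ / c).toNNReal, fun w => ?_⟩
  set x := U.orthogonalProjectionOnto w
  set y := Uᗮ.orthogonalProjectionOnto w
  have hw : w = x + y := (U.starProjection_add_starProjection_orthogonal w).symm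
  have hxy : ⟪w, γ w⟫_ℂ = ⟪x, γU x⟫_ℂ + ⟪y, γp y⟫_ℂ := by
    rw [hw, hγ_apply, inner_add_left, inner_add_right, inner_add_right,
      Submodule.inner_right_of_mem_orthogonal x.2 (γp y).2,
      Submodule.inner_left_of_mem_orthogonal (γU x).2 y.2]
    simp
  have hy_im : (⟪y, γp y⟫_ℂ).im = 0 :=
    Complex.conj_eq_iff_im.mp (by rw [inner_conj_symm]; exact hγp_symm y y)
  rw [hxy, Complex.add_im, Complex.add_re, hy_im, add_zero, Real.coe_toNNReal _ (by positivity)]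
  calc |(⟪x, γU x⟫_ℂ).im| ≤ ‖x‖ * ‖γU x‖ :=
        (Complex.abs_im_le_norm _).trans (norm_inner_le_norm _ _)
    _ ≤ ‖x‖ * (‖γU‖ * ‖x‖) := by gcongr; exact γU.le_opNorm x
    _ = ‖γU‖ / c * (c * ‖x‖ ^ 2) := by field_simp
    _ ≤ ‖γU‖ / c * ((⟪x, γU x⟫_ℂ).re + (⟪y, γp y⟫_ℂ).re) := by
        gcongr
        linarith [hγU x, hγp_nonneg y]

/-- If `γ` is bounded on `H₀` and satisfies Hypothesis (Γ), and `λ ∈ ℝ \ {0}`,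
then for every closed subspace `V ⊆ H₀` with inclusion `ι` and orthogonal projection `ι*`,
the operator `iλ·I_V + ι*γι` on `V` is bijective with bounded inverse
(i.e. it has a two-sided bounded inverse). -/
theorem stmt_5
    {H₀ : Type*} [NormedAddCommGroup H₀] [InnerProductSpace ℂ H₀] [CompleteSpace H₀]
    (γ : H₀ →L[ℂ] H₀) (hγ : HypGamma γ)
    (lam : ℝ) (hlam : lam ≠ 0)
    (V : Submodule ℂ H₀) (hV : IsClosed (V : Set H₀)) :
    ∃ S : V →L[ℂ] V,
      ((Complex.I * lam) • ContinuousLinearMap.id ℂ V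
          + (oproj V).comp (γ.comp V.subtypeL)).comp S = ContinuousLinearMap.id ℂ V ∧
      S.comp ((Complex.I * lam) • ContinuousLinearMap.id ℂ V
          + (oproj V).comp (γ.comp V.subtypeL)) = ContinuousLinearMap.id ℂ V := by
  have : CompleteSpace V := hV.completeSpace_coe
  have hoproj : oproj V = V.orthogonalProjectionOnto := dif_pos hV
  obtain ⟨K, hK⟩ := hγ.exists_isSectorial
  obtain ⟨u, hu⟩ := (hK.orthogonalProjectionOnto_comp V).isUnit_I_mul_smul_id_add hlam
  rw [hoproj]
  exact ⟨↑u⁻¹, by rw [← hu]; exact u.mul_inv, by rw [← hu]; exact u.inv_mul⟩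
end

section
/- Let H₀ and H₁ be complex Hilbert spaces, let a : dom(a) ⊆ H₀ → H₀ be a linear operator which is bijective from its domain onto H₀ with bounded inverse a⁻¹ ∈ L(H₀), and let b ∈ L(H₁, H₀), c ∈ L(H₀, H₁), d ∈ L(H₁) be bounded operators. Let M be the operator on H₀ × H₁ with domain dom(a) × H₁ given by M(u,v) = (au + bv, cu + dv). Then ran(M) is closed in H₀ × H₁ if and only if ran(d − c a⁻¹ b) is closed in H₁. -/
/-!
Eliminating `c` against `a` turns the block operator into an upper triangular one:
`(f, g)` lies in the range of `M` exactly when `g - c a⁻¹ f` lies in the range of the Schur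
complement `d - c a⁻¹ b`. The map `(f, g) ↦ g - c a⁻¹ f` is a quotient map onto `H₁` (it has
the continuous section `g ↦ (0, g)`), so closedness of a set and of its preimage are equivalent.
-/

open Topology

theorem isQuotientMap_snd_sub_comp_fst {E F : Type*} [TopologicalSpace E] [Zero E]
    [TopologicalSpace F] [AddGroup F] [IsTopologicalAddGroup F]
    {g : E → F} (hg : Continuous g) (hg0 : g 0 = 0) :
    IsQuotientMap fun p : E × F => p.2 - g p.1 :=
  .of_inverse (f := fun y => (0, y)) (by fun_prop) (by fun_prop) fun y => by simp [hg0]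

section BlockOperator

variable {R E F : Type*} [Ring R] [AddCommGroup E] [Module R E] [TopologicalSpace E]
  [AddCommGroup F] [Module R F] [TopologicalSpace F] [IsTopologicalAddGroup F]
  {a : E →ₗ.[R] E} {ainv : E →L[R] E} (b : F →L[R] E) (c : E →L[R] F) (d : F →L[R] F)

theorem exists_block_eq_iff_mem_range_schurComplement
    (hamem : ∀ f : E, ainv f ∈ a.domain)
    (haleft : ∀ u : a.domain, ainv (a u) = (u : E))
    (haright : ∀ f : E, a ⟨ainv f, hamem f⟩ = f) (p : E × F) :
    (∃ (u : a.domain) (v : F), p = (a u + b v, c (u : E) + d v)) ↔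
      p.2 - c (ainv p.1) ∈
        LinearMap.range ((d - c.comp (ainv.comp b) : F →L[R] F) : F →ₗ[R] F) := by
  constructor
  · rintro ⟨u, v, rfl⟩
    refine ⟨v, ?_⟩
    simp [haleft]
  · rintro ⟨v, hv⟩
    refine ⟨⟨ainv (p.1 - b v), hamem _⟩, v, Prod.ext ?_ ?_⟩
    · rw [haright, sub_add_cancel]
    · simp only [ContinuousLinearMap.toLinearMap_sub, ContinuousLinearMap.toLinearMap_comp,
        LinearMap.sub_apply, ContinuousLinearMap.coe_coe, LinearMap.coe_comp,
        Function.comp_apply] at hv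
      rw [eq_sub_iff_add_eq] at hv
      simp only [← hv, map_sub]
      abel

end BlockOperator

theorem stmt_11_general
    {H₀ H₁ : Type*} [NormedAddCommGroup H₀] [InnerProductSpace ℂ H₀]
    [NormedAddCommGroup H₁] [InnerProductSpace ℂ H₁]
    (a : H₀ →ₗ.[ℂ] H₀) (ainv : H₀ →L[ℂ] H₀)
    (hamem : ∀ f : H₀, ainv f ∈ a.domain)
    (haleft : ∀ u : a.domain, ainv (a u) = (u : H₀))
    (haright : ∀ f : H₀, a ⟨ainv f, hamem f⟩ = f)
    (b : H₁ →L[ℂ] H₀) (c : H₀ →L[ℂ] H₁) (d : H₁ →L[ℂ] H₁) :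
    IsClosed {p : H₀ × H₁ | ∃ (u : a.domain) (v : H₁),
        p = (a u + b v, c (u : H₀) + d v)} ↔
    IsClosed ((LinearMap.range ((d - c.comp (ainv.comp b) : H₁ →L[ℂ] H₁) : H₁ →ₗ[ℂ] H₁) : Submodule ℂ H₁) : Set H₁) := by
  have hshear := isQuotientMap_snd_sub_comp_fst (c.comp ainv).continuous (map_zero _)
  rw [← hshear.isClosed_preimage]
  congr!
  ext p
  exact exists_block_eq_iff_mem_range_schurComplement b c d hamem haleft haright p

/-- Let `a : dom a ⊆ H₀ → H₀` be bijective from its domain onto `H₀` with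
bounded inverse `ainv`, and `b, c, d` bounded. Then the operator
`M(u,v) = (au + bv, cu + dv)` with domain `dom a × H₁` has closed range in `H₀ × H₁` iff
the Schur complement `d − c a⁻¹ b` has closed range in `H₁`. -/
theorem stmt_11
    {H₀ H₁ : Type*} [NormedAddCommGroup H₀] [InnerProductSpace ℂ H₀] [CompleteSpace H₀]
    [NormedAddCommGroup H₁] [InnerProductSpace ℂ H₁] [CompleteSpace H₁]
    (a : H₀ →ₗ.[ℂ] H₀) (ainv : H₀ →L[ℂ] H₀)
    (hamem : ∀ f : H₀, ainv f ∈ a.domain)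
    (haleft : ∀ u : a.domain, ainv (a u) = (u : H₀))
    (haright : ∀ f : H₀, a ⟨ainv f, hamem f⟩ = f)
    (b : H₁ →L[ℂ] H₀) (c : H₀ →L[ℂ] H₁) (d : H₁ →L[ℂ] H₁) :
    IsClosed {p : H₀ × H₁ | ∃ (u : a.domain) (v : H₁),
        p = (a u + b v, c (u : H₀) + d v)} ↔
    IsClosed ((LinearMap.range ((d - c.comp (ainv.comp b) : H₁ →L[ℂ] H₁) : H₁ →ₗ[ℂ] H₁) : Submodule ℂ H₁) : Set H₁) :=
  stmt_11_general a ainv hamem haleft haright b c d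
end

section
/- Let H be a complex Hilbert space and A : dom(A) ⊆ H → H a densely defined closed linear operator such that Re⟨Ax, x⟩ = 0 for all x ∈ dom(A). Let γ be a bounded operator on H satisfying Hypothesis (Γ). Then, with γ + A and γ − A defined on dom(A), one has ker(γ + A) = ker(γ − A) = ker(γ) ∩ ker(A). -/
open Complex Filter
open scoped InnerProductSpace

lemma pos_op_null {E : Type*} [NormedAddCommGroup E] [InnerProductSpace ℂ E]
    (T : E →L[ℂ] E) (hsa : ∀ y z : E, ⟪T y, z⟫_ℂ = ⟪y, T z⟫_ℂ)
    (hpos : ∀ y : E, 0 ≤ (⟪y, T y⟫_ℂ).re) (v : E) (hv : (⟪v, T v⟫_ℂ).re = 0) :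
    T v = 0 := by
  have hre : ∀ z : E, (⟪z, T v⟫_ℂ).re = 0 := by
    intro z
    set a := (⟪z, T z⟫_ℂ).re with ha
    set b := (⟪z, T v⟫_ℂ).re with hb
    have hq : ∀ t : ℝ, 0 ≤ 2 * t * b + t ^ 2 * a := by
      intro t
      have h0 := hpos (v + (t : ℂ) • z)
      have hexp : ⟪v + (t : ℂ) • z, T (v + (t : ℂ) • z)⟫_ℂ =
          ⟪v, T v⟫_ℂ + (t : ℂ) * ⟪v, T z⟫_ℂ + (t : ℂ) * ⟪z, T v⟫_ℂ
            + (t : ℂ) * (t : ℂ) * ⟪z, T z⟫_ℂ := by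
        simp only [map_add, map_smul, inner_add_add_self, inner_add_left, inner_add_right,
          inner_smul_left, inner_smul_right, Complex.conj_ofReal]
        ring
      have hcrt : ⟪v, T z⟫_ℂ = starRingEnd ℂ ⟪z, T v⟫_ℂ := by
        rw [← hsa v z, ← inner_conj_symm]
      have hbb : (⟪T v, z⟫_ℂ).re = b := by
        rw [hb]; exact inner_re_symm (𝕜 := ℂ) (T v) z
      have : (⟪v + (t : ℂ) • z, T (v + (t : ℂ) • z)⟫_ℂ).re = 2 * t * b + t ^ 2 * a := by
        rw [hexp, hcrt]
        simp [hv, Complex.add_re, Complex.mul_re, ← hb, ← ha, Complex.conj_re, Complex.conj_im]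
        rw [hbb]; ring
      linarith [h0, this.ge]
    have ha0 : 0 ≤ a := hpos z
    have hkey := hq (-b / (a + 1))
    have hpos1 : (0:ℝ) < a + 1 := by linarith
    have h2 : 0 ≤ (2 * (-b / (a + 1)) * b + (-b / (a + 1)) ^ 2 * a) * (a + 1) ^ 2 :=
      mul_nonneg hkey (sq_nonneg _)
    have h3 : (2 * (-b / (a + 1)) * b + (-b / (a + 1)) ^ 2 * a) * (a + 1) ^ 2
        = -(b ^ 2 * (a + 2)) := by
      field_simp
      ring
    rw [h3] at h2
    nlinarith [sq_nonneg b]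
  have hall : ∀ z : E, ⟪z, T v⟫_ℂ = 0 := by
    intro z
    have h1 := hre z
    have h2 := hre (Complex.I • z)
    rw [inner_smul_left] at h2
    simp only [Complex.conj_I, neg_mul, Complex.neg_re, Complex.mul_re, Complex.I_re,
      Complex.I_im, zero_mul, one_mul, zero_sub, neg_neg] at h2
    exact Complex.ext h1 h2
  have := hall (T v)
  rwa [inner_self_eq_zero] at this

lemma gamma_null {H : Type*} [NormedAddCommGroup H] [InnerProductSpace ℂ H] [CompleteSpace H]
    (γ : H →L[ℂ] H) (hγ : HypGamma γ) (x : H) (hx : (⟪x, γ x⟫_ℂ).re = 0) : γ x = 0 := by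
  obtain ⟨U, c, γU, γp, hUc, hc, hγU, hsa, hpos, hsum⟩ := hγ
  haveI : CompleteSpace U := hUc.completeSpace_coe
  obtain ⟨u, hu, v, hv, hxuv⟩ := U.exists_add_mem_mem_orthogonal x
  set u' : U := ⟨u, hu⟩
  set v' : Uᗮ := ⟨v, hv⟩
  have hγx : γ x = (γU u' : H) + (γp v' : H) := by rw [hxuv]; exact hsum u' v'
  have hc1 : ⟪u, ((γp v' : Uᗮ) : H)⟫_ℂ = 0 :=
    (Submodule.mem_orthogonal U _).1 (γp v').2 u hu
  have hc2 : ⟪v, ((γU u' : U) : H)⟫_ℂ = 0 :=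
    (Submodule.mem_orthogonal' U v).1 hv _ (γU u').2
  have hinner : ⟪x, γ x⟫_ℂ = ⟪u', γU u'⟫_ℂ + ⟪v', γp v'⟫_ℂ := by
    rw [hγx, hxuv]
    rw [inner_add_left, inner_add_right, inner_add_right, hc1, hc2]
    simp [Submodule.coe_inner, u', v']
  have hre : (⟪u', γU u'⟫_ℂ).re + (⟪v', γp v'⟫_ℂ).re = 0 := by
    rw [← Complex.add_re, ← hinner, hx]
  have h1 : c * ‖u'‖ ^ 2 ≤ (⟪u', γU u'⟫_ℂ).re := hγU u'
  have h2 : 0 ≤ (⟪v', γp v'⟫_ℂ).re := hpos v'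
  have hnc : 0 ≤ c * ‖u'‖ ^ 2 := by positivity
  have hu0 : u' = 0 := by
    have : c * ‖u'‖ ^ 2 = 0 := le_antisymm (by linarith) hnc
    have hn : ‖u'‖ ^ 2 = 0 := by
      rcases mul_eq_zero.1 this with h | h
      · exact absurd h hc.ne'
      · exact h
    have : ‖u'‖ = 0 := by nlinarith [norm_nonneg u']
    simpa using norm_eq_zero.mp this
  have hv0 : γp v' = 0 := by
    apply pos_op_null γp hsa hpos
    have hr1 : (⟪u', γU u'⟫_ℂ).re = 0 := by
      rw [hu0]; simp
    linarith
  rw [hγx, hu0, hv0]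
  simp

/-- Let `A` be densely defined and closed in `H` with `Re⟨Ax, x⟩ = 0` for all
`x ∈ dom A`, and let `γ` be bounded satisfying Hypothesis (Γ). Then, on `dom A`,
`ker(γ + A) = ker(γ − A) = ker γ ∩ ker A`.
(The paper's inner product `⟨a, b⟩`, linear in the first argument, is Mathlib's `⟪b, a⟫_ℂ`.) -/
theorem stmt_12
    {H : Type*} [NormedAddCommGroup H] [InnerProductSpace ℂ H] [CompleteSpace H]
    (A : H →ₗ.[ℂ] H)
    (hdense : Dense (A.domain : Set H))
    (hAclosed : IsClosed (A.graph : Set (H × H)))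
    (hskew : ∀ x : A.domain, (⟪(x : H), A x⟫_ℂ).re = 0)
    (γ : H →L[ℂ] H) (hγ : HypGamma γ) :
    ∀ x : A.domain,
      ((γ (x : H) + A x = 0) ↔ (γ (x : H) - A x = 0)) ∧
      ((γ (x : H) + A x = 0) ↔ (γ (x : H) = 0 ∧ A x = 0)) := by
  intro x
  have fwd : γ (x : H) + A x = 0 → γ (x : H) = 0 ∧ A x = 0 := by
    intro h
    have hγA : γ (x : H) = -(A x) := eq_neg_of_add_eq_zero_left h
    have hre : (⟪(x : H), γ (x : H)⟫_ℂ).re = 0 := by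
      rw [hγA, inner_neg_right, Complex.neg_re, hskew x, neg_zero]
    have hγ0 : γ (x : H) = 0 := gamma_null γ hγ _ hre
    refine ⟨hγ0, ?_⟩
    rw [hγ0] at hγA
    simpa using hγA.symm
  have fwd' : γ (x : H) - A x = 0 → γ (x : H) = 0 ∧ A x = 0 := by
    intro h
    have hγA : γ (x : H) = A x := sub_eq_zero.mp h
    have hre : (⟪(x : H), γ (x : H)⟫_ℂ).re = 0 := by rw [hγA]; exact hskew x
    have hγ0 : γ (x : H) = 0 := gamma_null γ hγ _ hre
    exact ⟨hγ0, by rw [← hγA, hγ0]⟩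
  constructor
  · constructor
    · intro h; obtain ⟨h1, h2⟩ := fwd h; rw [h1, h2]; abel
    · intro h; obtain ⟨h1, h2⟩ := fwd' h; rw [h1, h2]; abel
  · constructor
    · exact fwd
    · rintro ⟨h1, h2⟩; rw [h1, h2]; abel
end

section
/- Let H₀ and H₁ be complex Hilbert spaces, C : dom(C) ⊆ H₀ → H₁ densely defined, closed and with closed range, and let g be a bounded operator on H₁ satisfying Hypothesis (Γ) and having closed range. Let κ : ran(C) → H₁ denote the inclusion map and let p be the orthogonal projection of H₁ onto ran(g). If there exists d > 0 such that ‖u‖ ≤ d‖pu‖ for all u ∈ ran(C) that are orthogonal to ker(p) ∩ ran(C), then κ*gκ has closed range in ran(C). -/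
/-!
Hypothesis (Γ) yields `‖g x‖² ≤ K · Re ⟪x, g x⟫`: on `U` from coercivity, on `Uᗮ` from the
Cauchy–Schwarz inequality `‖γ y‖² ≤ ‖γ‖ ⟪y, γ y⟫` for a positive operator. So `g` is accretive,
hence `ker g ⊥ ran g`, and `Re ⟪x, g x⟫ = 0` forces `g x = 0`. Let `T = κ*gκ` and take
`x ∈ ran C` orthogonal to `ker T`. Every `v ∈ ker p ∩ ran C` satisfies `⟪v, g v⟫ = 0`, so `v ∈ ker T`
and `x ⊥ v`; the hypothesis gives `‖x‖ ≤ d ‖p x‖`. By the open mapping theorem `g x = g x'` with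
`‖x'‖ ≤ m ‖g x‖`, and `p x = p x'` because `x - x' ∈ ker g ⊆ ker p`; thus `‖x‖ ≤ d m ‖g x‖`.
Finally `‖g x‖² ≤ K Re ⟪x, T x⟫ ≤ K ‖x‖ ‖T x‖`, so `T` is bounded below on `(ker T)ᗮ` and its
range is closed.
-/

open Complex Filter
open scoped InnerProductSpace

open ComplexConjugate

theorem ContinuousLinearMap.exists_preimage_norm_le_of_isClosed_range {𝕜 E F : Type*}
    [NontriviallyNormedField 𝕜] [NormedAddCommGroup E] [NormedSpace 𝕜 E] [CompleteSpace E]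
    [NormedAddCommGroup F] [NormedSpace 𝕜 F] [CompleteSpace F] (f : E →L[𝕜] F)
    (hf : IsClosed (f.range : Set F)) :
    ∃ C > 0, ∀ x, ∃ x', f x' = f x ∧ ‖x'‖ ≤ C * ‖f x‖ := by
  have : CompleteSpace f.range := hf.completeSpace_coe
  obtain ⟨C, hC, h⟩ :=
    f.rangeRestrict.exists_preimage_norm_le f.toLinearMap.surjective_rangeRestrict
  refine ⟨C, hC, fun x => ?_⟩
  obtain ⟨x', hx', hle⟩ := h (f.rangeRestrict x)
  exact ⟨x', congrArg Subtype.val hx', hle⟩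

section RCLike

variable {𝕜 E : Type*} [RCLike 𝕜] [NormedAddCommGroup E] [InnerProductSpace 𝕜 E]

theorem Submodule.inner_add_add_of_mem_orthogonal {U : Submodule 𝕜 E} {u u' v v' : E}
    (hu : u ∈ U) (hu' : u' ∈ U) (hv : v ∈ Uᗮ) (hv' : v' ∈ Uᗮ) :
    ⟪u + v, u' + v'⟫_𝕜 = ⟪u, u'⟫_𝕜 + ⟪v, v'⟫_𝕜 := by
  rw [inner_add_left, inner_add_right, inner_add_right,
    Submodule.inner_right_of_mem_orthogonal hu hv', Submodule.inner_left_of_mem_orthogonal hu' hv]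
  ring

theorem norm_apply_sq_le_of_coercive (T : E →L[𝕜] E) {c : ℝ} (hc : 0 < c)
    (hT : ∀ x, c * ‖x‖ ^ 2 ≤ RCLike.re ⟪x, T x⟫_𝕜) (x : E) :
    ‖T x‖ ^ 2 ≤ ‖T‖ ^ 2 / c * RCLike.re ⟪x, T x⟫_𝕜 :=
  calc ‖T x‖ ^ 2 ≤ (‖T‖ * ‖x‖) ^ 2 := by gcongr; exact T.le_opNorm x
    _ = ‖T‖ ^ 2 / c * (c * ‖x‖ ^ 2) := by field_simp
    _ ≤ ‖T‖ ^ 2 / c * RCLike.re ⟪x, T x⟫_𝕜 := by gcongr; exact hT x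

theorem LinearMap.ker_le_orthogonal_range_of_re_inner_nonneg {T : E →ₗ[𝕜] E}
    (hT : ∀ x, 0 ≤ RCLike.re ⟪x, T x⟫_𝕜) : LinearMap.ker T ≤ (LinearMap.range T)ᗮ := by
  intro a ha
  rw [Submodule.mem_orthogonal']
  rintro _ ⟨y, rfl⟩
  set w := ⟪a, T y⟫_𝕜
  set r := RCLike.re ⟪y, T y⟫_𝕜
  have hr : 0 ≤ r := hT y
  set s : ℝ := 1 / (r + 1)
  have hs : 0 < s := by positivity
  have hsr : s * r < 1 := by
    rw [div_mul_eq_mul_div, one_mul, div_lt_one (by linarith)]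
    linarith
  -- In the test below the linear term `-s ‖w‖²` beats the quadratic one `s² ‖w‖² r`, as `s r < 1`.
  have key := hT (a - ((s : 𝕜) * conj w) • y)
  have hexp : RCLike.re ⟪a - ((s : 𝕜) * conj w) • y, T (a - ((s : 𝕜) * conj w) • y)⟫_𝕜
      = s * ‖w‖ ^ 2 * (s * r - 1) := by
    rw [map_sub, map_smul, LinearMap.mem_ker.mp ha, zero_sub, inner_neg_right, inner_sub_left,
      inner_smul_left, inner_smul_right, inner_smul_right]
    calc _ = RCLike.re (((s * ‖w‖ ^ 2 : ℝ) : 𝕜) * ((s : 𝕜) * ⟪y, T y⟫_𝕜 - 1)) := by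
          congr 1
          simp only [map_mul, RCLike.conj_ofReal, RCLike.conj_conj]
          push_cast
          linear_combination ((s : 𝕜) * ((s : 𝕜) * ⟪y, T y⟫_𝕜 - 1)) * RCLike.conj_mul w
      _ = s * ‖w‖ ^ 2 * (s * r - 1) := by
          rw [RCLike.re_ofReal_mul]
          simp [r]
  rw [hexp] at key
  have hw : ‖w‖ ^ 2 ≤ 0 := by
    by_contra! hw
    nlinarith [mul_pos (mul_pos hs hw) (sub_pos.2 hsr)]
  simpa using hw

theorem ContinuousLinearMap.isClosed_range_of_norm_le_of_mem_orthogonal_ker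
    {F : Type*} [NormedAddCommGroup F] [NormedSpace 𝕜 F] [CompleteSpace E]
    (T : E →L[𝕜] F) {D : ℝ} (hT : ∀ x ∈ T.kerᗮ, ‖x‖ ≤ D * ‖T x‖) :
    IsClosed (T.range : Set F) := by
  have : CompleteSpace T.ker := T.isClosed_ker.completeSpace_coe
  set S := T ∘L T.kerᗮ.subtypeL
  have hS : AntilipschitzWith D.toNNReal S := S.antilipschitz_of_bound fun x =>
    (hT x x.2).trans (by gcongr; exacts [D.le_coe_toNNReal, le_rfl])
  have hrange : (T.range : Set F) = Set.range S := by
    ext v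
    constructor
    · rintro ⟨x, rfl⟩
      obtain ⟨a, ha, b, hb, rfl⟩ := T.ker.exists_add_mem_mem_orthogonal x
      exact ⟨⟨b, hb⟩, by simp [S, show T a = 0 from ha]⟩
    · rintro ⟨x, rfl⟩
      exact ⟨x, rfl⟩
  rw [hrange]
  exact hS.isClosed_range S.uniformContinuous

theorem ContinuousLinearMap.exists_norm_starProjection_range_le [CompleteSpace E]
    (g : E →L[𝕜] E) (hg : IsClosed (g.range : Set E)) [g.range.HasOrthogonalProjection]
    (hker : g.ker ≤ g.rangeᗮ) :
    ∃ m, ∀ x, ‖g.range.starProjection x‖ ≤ m * ‖g x‖ := by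
  obtain ⟨m, -, hm⟩ := g.exists_preimage_norm_le_of_isClosed_range hg
  refine ⟨m, fun x => ?_⟩
  obtain ⟨x', hx', hle⟩ := hm x
  have hproj : g.range.starProjection x = g.range.starProjection x' := by
    rw [← sub_eq_zero, ← map_sub, Submodule.starProjection_apply_eq_zero_iff]
    exact hker (by simp [hx'])
  rw [hproj]
  exact (g.range.norm_starProjection_apply_le x').trans hle

theorem isClosed_range_compression (R : Submodule 𝕜 E) [CompleteSpace R] (g : E →L[𝕜] E)
    [g.range.HasOrthogonalProjection] {K m d : ℝ} (hK : 0 ≤ K) (hd : 0 ≤ d)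
    (hgK : ∀ x, ‖g x‖ ^ 2 ≤ K * RCLike.re ⟪x, g x⟫_𝕜)
    (hgm : ∀ x, ‖g.range.starProjection x‖ ≤ m * ‖g x‖)
    (hR : ∀ u ∈ R, u ∈ (g.rangeᗮ ⊓ R)ᗮ → ‖u‖ ≤ d * ‖g.range.starProjection u‖) :
    IsClosed ((R.orthogonalProjectionOnto ∘L g ∘L R.subtypeL).range : Set R) := by
  set T := R.orthogonalProjectionOnto ∘L g ∘L R.subtypeL
  have hinner : ∀ x : R, ⟪x, T x⟫_𝕜 = ⟪(x : E), g x⟫_𝕜 := fun x =>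
    R.inner_orthogonalProjectionOnto_eq_of_mem_left x (g x)
  have hzero : ∀ x, RCLike.re ⟪x, g x⟫_𝕜 = 0 → g x = 0 := fun x hx => by
    have := hgK x
    rw [hx, mul_zero] at this
    simpa using this
  refine T.isClosed_range_of_norm_le_of_mem_orthogonal_ker (D := d ^ 2 * m ^ 2 * K) fun x hx => ?_
  have horth : (x : E) ∈ (g.rangeᗮ ⊓ R)ᗮ := by
    rintro v ⟨hvG, hvR⟩
    have hvgv : ⟪v, g v⟫_𝕜 = 0 := (Submodule.mem_orthogonal' _ _).mp hvG _ ⟨v, rfl⟩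
    have hTv : (⟨v, hvR⟩ : R) ∈ T.ker := by
      simp [T, hzero v (by rw [hvgv, map_zero])]
    simpa using (Submodule.mem_orthogonal _ _).mp hx _ hTv
  have hx_le : ‖x‖ ≤ d * m * ‖g x‖ := calc
    ‖x‖ ≤ d * ‖g.range.starProjection x‖ := hR x x.2 horth
    _ ≤ d * (m * ‖g x‖) := by gcongr; exact hgm x
    _ = d * m * ‖g x‖ := by ring
  have hgx_sq : ‖g x‖ ^ 2 ≤ K * (‖x‖ * ‖T x‖) := calc
    ‖g x‖ ^ 2 ≤ K * RCLike.re ⟪x, T x⟫_𝕜 := by rw [hinner]; exact hgK x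
    _ ≤ K * (‖x‖ * ‖T x‖) := by gcongr; exact re_inner_le_norm _ _
  rcases (norm_nonneg x).eq_or_lt with hx0 | hxpos
  · rw [← hx0]
    positivity
  refine le_of_mul_le_mul_right ?_ hxpos
  calc ‖x‖ * ‖x‖ ≤ (d * m * ‖g x‖) ^ 2 := by rw [← sq]; gcongr
    _ = d ^ 2 * m ^ 2 * ‖g x‖ ^ 2 := by ring
    _ ≤ d ^ 2 * m ^ 2 * (K * (‖x‖ * ‖T x‖)) := by gcongr
    _ = d ^ 2 * m ^ 2 * K * ‖T x‖ * ‖x‖ := by ring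

end RCLike

theorem ContinuousLinearMap.IsPositive.norm_apply_sq_le {E : Type*} [NormedAddCommGroup E]
    [InnerProductSpace ℂ E] [CompleteSpace E] {γ : E →L[ℂ] E} (hγ : γ.IsPositive) (y : E) :
    ‖γ y‖ ^ 2 ≤ ‖γ‖ * RCLike.re ⟪y, γ y⟫_ℂ := by
  have h0 : 0 ≤ γ := (ContinuousLinearMap.nonneg_iff_isPositive γ).mpr hγ
  set s := CFC.sqrt γ
  have hss : s * s = γ := CFC.sqrt_mul_sqrt_self γ
  have hs : IsSelfAdjoint s := (CFC.sqrt_nonneg γ).isSelfAdjoint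
  have hsn : ‖s‖ ^ 2 = ‖γ‖ := by rw [CFC.norm_sqrt γ, Real.sq_sqrt (norm_nonneg _)]
  have hsy : ‖s y‖ ^ 2 = RCLike.re ⟪y, γ y⟫_ℂ := by
    rw [← hss, mul_apply_eq_comp, ← hs.adjoint_eq, ContinuousLinearMap.adjoint_inner_right,
      hs.adjoint_eq, inner_self_eq_norm_sq_to_K]
    norm_cast
  calc ‖γ y‖ ^ 2 = ‖s (s y)‖ ^ 2 := by rw [← hss]; rfl
    _ ≤ (‖s‖ * ‖s y‖) ^ 2 := by gcongr; exact s.le_opNorm _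
    _ = ‖γ‖ * RCLike.re ⟪y, γ y⟫_ℂ := by rw [mul_pow, hsn, hsy]

section Hilbert

variable {H : Type*} [NormedAddCommGroup H] [InnerProductSpace ℂ H] [CompleteSpace H]

theorem oproj_eq_orthogonalProjectionOnto (K : Submodule ℂ H) [CompleteSpace K] :
    oproj K = K.orthogonalProjectionOnto := by
  rw [oproj, dif_pos (completeSpace_coe_iff_isComplete.mp ‹_›).isClosed]

theorem HypGamma.exists_norm_sq_le_mul_re_inner {g : H →L[ℂ] H} (hg : HypGamma g) :
    ∃ K > 0, ∀ x, ‖g x‖ ^ 2 ≤ K * RCLike.re ⟪x, g x⟫_ℂ := by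
  obtain ⟨U, c, γU, γp, hU, hc, hcoer, hsymm, hpos, hdecomp⟩ := hg
  have : CompleteSpace U := hU.completeSpace_coe
  have hγp : γp.IsPositive := ⟨hsymm, fun y => by
    rw [ContinuousLinearMap.reApplyInnerSelf, hsymm]
    exact hpos y⟩
  refine ⟨‖γU‖ ^ 2 / c + ‖γp‖ + 1, by positivity, fun x => ?_⟩
  set u := U.orthogonalProjectionOnto x
  set v := Uᗮ.orthogonalProjectionOnto x
  have hx : x = u + v := (U.starProjection_add_starProjection_orthogonal x).symm
  have hgx : g x = γU u + γp v := by rw [← hdecomp, ← hx]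
  have hnorm : ‖g x‖ ^ 2 = ‖γU u‖ ^ 2 + ‖γp v‖ ^ 2 := by
    rw [hgx, @norm_sq_eq_re_inner ℂ, Submodule.inner_add_add_of_mem_orthogonal (γU u).2 (γU u).2
      (γp v).2 (γp v).2, map_add, ← @norm_sq_eq_re_inner ℂ, ← @norm_sq_eq_re_inner ℂ]
    rfl
  have hre : RCLike.re ⟪x, g x⟫_ℂ = RCLike.re ⟪u, γU u⟫_ℂ + RCLike.re ⟪v, γp v⟫_ℂ := by
    rw [hgx]
    conv_lhs => rw [hx]
    rw [Submodule.inner_add_add_of_mem_orthogonal u.2 (γU u).2 v.2 (γp v).2, map_add]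
    rfl
  have hu := norm_apply_sq_le_of_coercive γU hc hcoer u
  have hv := hγp.norm_apply_sq_le v
  have hu0 : 0 ≤ RCLike.re ⟪u, γU u⟫_ℂ := (mul_nonneg hc.le (sq_nonneg _)).trans (hcoer u)
  have hv0 : 0 ≤ RCLike.re ⟪v, γp v⟫_ℂ := hpos v
  rw [hnorm, hre]
  nlinarith [mul_nonneg (add_nonneg (norm_nonneg γp) zero_le_one) hu0,
    mul_nonneg (add_nonneg (div_nonneg (sq_nonneg ‖γU‖) hc.le) zero_le_one) hv0]

end Hilbert

theorem stmt_15_general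
    {H₀ H₁ : Type*} [NormedAddCommGroup H₀] [InnerProductSpace ℂ H₀]
    [NormedAddCommGroup H₁] [InnerProductSpace ℂ H₁] [CompleteSpace H₁]
    (C : H₀ →ₗ.[ℂ] H₁)
    (hranC : IsClosed ((LinearMap.range C.toFun : Submodule ℂ H₁) : Set H₁))
    (g : H₁ →L[ℂ] H₁) (hg : HypGamma g)
    (hrang : IsClosed ((LinearMap.range (g : H₁ →ₗ[ℂ] H₁) : Submodule ℂ H₁) : Set H₁))
    (d : ℝ) (hd : 0 < d)
    (hineq : ∀ u ∈ LinearMap.range C.toFun,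
      u ∈ ((LinearMap.ker (((LinearMap.range (g : H₁ →ₗ[ℂ] H₁)).subtypeL.comp (oproj (LinearMap.range (g : H₁ →ₗ[ℂ] H₁))) : H₁ →ₗ[ℂ] H₁)) :
          Submodule ℂ H₁) ⊓ LinearMap.range C.toFun)ᗮ →
      ‖u‖ ≤ d * ‖(LinearMap.range (g : H₁ →ₗ[ℂ] H₁)).subtypeL (oproj (LinearMap.range (g : H₁ →ₗ[ℂ] H₁)) u)‖) :
    IsClosed ((LinearMap.range
        (((oproj (LinearMap.range C.toFun)).comp (g.comp (LinearMap.range C.toFun).subtypeL) :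
          LinearMap.range C.toFun →ₗ[ℂ] LinearMap.range C.toFun)) :
        Submodule ℂ (LinearMap.range C.toFun)) :
      Set (LinearMap.range C.toFun)) := by
  have : CompleteSpace (LinearMap.range C.toFun) := hranC.completeSpace_coe
  have : CompleteSpace g.range := hrang.completeSpace_coe
  obtain ⟨K, hK, hgK⟩ := hg.exists_norm_sq_le_mul_re_inner
  have hker : g.ker ≤ g.rangeᗮ := LinearMap.ker_le_orthogonal_range_of_re_inner_nonneg fun x =>
    nonneg_of_mul_nonneg_right ((sq_nonneg _).trans (hgK x)) hK
  obtain ⟨m, hm⟩ := g.exists_norm_starProjection_range_le hrang hker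
  rw [oproj_eq_orthogonalProjectionOnto] at hineq ⊢
  refine isClosed_range_compression _ g hK.le hd.le hgK hm fun u hu hperp => hineq u hu ?_
  rwa [← Submodule.ker_starProjection g.range] at hperp

/-- Let `C` be densely defined, closed, with closed range, and let `g` be
bounded on `H₁`, satisfying Hypothesis (Γ) and with closed range. Let `κ` be the inclusion
`ran C → H₁` and `p` the orthogonal projection of `H₁` onto `ran g` (as an operator on `H₁`).
If there is `d > 0` with `‖u‖ ≤ d‖pu‖` for all `u ∈ ran C` orthogonal to `ker p ∩ ran C`,
then `κ*gκ` has closed range in `ran C`. -/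
theorem stmt_15
    {H₀ H₁ : Type*} [NormedAddCommGroup H₀] [InnerProductSpace ℂ H₀] [CompleteSpace H₀]
    [NormedAddCommGroup H₁] [InnerProductSpace ℂ H₁] [CompleteSpace H₁]
    (C : H₀ →ₗ.[ℂ] H₁)
    (hdense : Dense (C.domain : Set H₀))
    (hCclosed : IsClosed (C.graph : Set (H₀ × H₁)))
    (hranC : IsClosed ((LinearMap.range C.toFun : Submodule ℂ H₁) : Set H₁))
    (g : H₁ →L[ℂ] H₁) (hg : HypGamma g)
    (hrang : IsClosed ((LinearMap.range (g : H₁ →ₗ[ℂ] H₁) : Submodule ℂ H₁) : Set H₁))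
    (d : ℝ) (hd : 0 < d)
    (hineq : ∀ u ∈ LinearMap.range C.toFun,
      u ∈ ((LinearMap.ker (((LinearMap.range (g : H₁ →ₗ[ℂ] H₁)).subtypeL.comp (oproj (LinearMap.range (g : H₁ →ₗ[ℂ] H₁))) : H₁ →ₗ[ℂ] H₁)) :
          Submodule ℂ H₁) ⊓ LinearMap.range C.toFun)ᗮ →
      ‖u‖ ≤ d * ‖(LinearMap.range (g : H₁ →ₗ[ℂ] H₁)).subtypeL (oproj (LinearMap.range (g : H₁ →ₗ[ℂ] H₁)) u)‖) :
    IsClosed ((LinearMap.range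
        (((oproj (LinearMap.range C.toFun)).comp (g.comp (LinearMap.range C.toFun).subtypeL) :
          LinearMap.range C.toFun →ₗ[ℂ] LinearMap.range C.toFun)) :
        Submodule ℂ (LinearMap.range C.toFun)) :
      Set (LinearMap.range C.toFun)) :=
  stmt_15_general C hranC g hg hrang d hd hineq
end
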